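/- Fix finite index sets a ∈ {1,…,M} and i ∈ {1,…,N}, a real M×N matrix A, and for each a real numbers V_a > 0, 0 < q_a < V_a, Z_a, p_a. Define σ̃_a² = (1/q_a − 1/V_a)⁻¹, ỹ_a = σ̃_a²·(p_a/q_a − Z_a/V_a), ŝ_a = (p_a − Z_a)/V_a, and τ_a^s = (V_a − q_a)/V_a². Then one AMP iteration over the pseudo-linear model with observations ỹ_a and noise variances σ̃_a² coincides with the GAMP updates; namely, for every i: (i) Σ_a A_{ai}²/(σ̃_a² + V_a) = Σ_a A_{ai}² τ_a^s; (ii) for any reals x̂_i and Σ_i: x̂_i + Σ_i · Σ_a A_{ai}·(ỹ_a − Z_a)/(σ̃_a² + V_a) = x̂_i + Σ_i · Σ_a A_{ai} ŝ_a; and (iii) for every a and any reals x̂_1,…,x̂_N, W_a: Σ_i A_{ai} x̂_i − W_a·(ỹ_a − Z_a)/(σ̃_a² + V_a) = Σ_i A_{ai} x̂_i − W_a ŝ_a. (This establishes that Gr-AMP with one inner AMP iteration is equivalent to the original GAMP algorithm.) -/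
import Mathlib


/-- Gr-AMP with one inner AMP iteration coincides with the GAMP updates. -/
theorem grAMP_eq_GAMP
    (M N : ℕ) (A : Matrix (Fin M) (Fin N) ℝ)
    (V q Z p : Fin M → ℝ)
    (hV : ∀ a, 0 < V a) (hq : ∀ a, 0 < q a) (hqV : ∀ a, q a < V a)
    (σt2 yt sh τs : Fin M → ℝ)
    (hσ : ∀ a, σt2 a = (1 / q a - 1 / V a)⁻¹)
    (hy : ∀ a, yt a = σt2 a * (p a / q a - Z a / V a))
    (hs : ∀ a, sh a = (p a - Z a) / V a)
    (hτ : ∀ a, τs a = (V a - q a) / (V a) ^ 2) :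
    (∀ i : Fin N,
        ∑ a, (A a i) ^ 2 / (σt2 a + V a) = ∑ a, (A a i) ^ 2 * τs a) ∧
    (∀ (i : Fin N) (xhat Si : ℝ),
        xhat + Si * ∑ a, A a i * (yt a - Z a) / (σt2 a + V a) =
          xhat + Si * ∑ a, A a i * sh a) ∧
    (∀ (a : Fin M) (xhat : Fin N → ℝ) (W : ℝ),
        (∑ i, A a i * xhat i) - W * (yt a - Z a) / (σt2 a + V a) =
          (∑ i, A a i * xhat i) - W * sh a) := by
  have h1 : ∀ a, σt2 a + V a = V a ^ 2 / (V a - q a) := by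
    intro a
    have hVa : V a ≠ 0 := (hV a).ne'
    have hqa : q a ≠ 0 := (hq a).ne'
    have hVq : V a - q a ≠ 0 := sub_ne_zero.2 (hqV a).ne'
    rw [hσ a]
    field_simp
    ring
  have h2 : ∀ a, (yt a - Z a) / (σt2 a + V a) = sh a := by
    intro a
    have hVa : V a ≠ 0 := (hV a).ne'
    have hqa : q a ≠ 0 := (hq a).ne'
    have hVq : V a - q a ≠ 0 := sub_ne_zero.2 (hqV a).ne'
    rw [h1 a, hy a, hσ a, hs a]
    field_simp
    ring
  have h3 : ∀ a, 1 / (σt2 a + V a) = τs a := by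
    intro a
    have hVa : V a ≠ 0 := (hV a).ne'
    have hVq : V a - q a ≠ 0 := sub_ne_zero.2 (hqV a).ne'
    rw [h1 a, hτ a, one_div_div]
  refine ⟨fun i => ?_, fun i xhat Si => ?_, fun a xhat W => ?_⟩
  · refine Finset.sum_congr rfl fun a _ => ?_
    rw [← h3 a, mul_one_div]
  · congr 1
    refine congrArg _ (Finset.sum_congr rfl fun a _ => ?_)
    rw [mul_div_assoc, h2 a]
  · rw [mul_div_assoc, h2 a]
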